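/- If columns of X lie in the span of U (X = UU'X), then the generalized eigenproblem (S^r)^{-1} S_b V = VΛ with S_b = F_b F_b' and F_b = UU'F_b is solved by V = U(Γ^r)^{-1/2} V_R, where (Λ, V_R) is an eigenpair family of R = (Γ^r)^{-1/2} U' S_b U (Γ^r)^{-1/2}; i.e., (S^r)^{-1} S_b V = VΛ holds. -/
import Mathlib


open Matrix BigOperators

/-- The generalized eigenproblem `(S^r)⁻¹ S_b V = V Λ` with `S_b = F_b F_bᵀ` and
`UUᵀF_b = F_b` is solved by `V = U (Γ^r)^{-1/2} V_R`, where `(Λ, V_R)` is an eigenpair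
family of `R = (Γ^r)^{-1/2} Uᵀ S_b U (Γ^r)^{-1/2}`. -/
theorem stmt17 (d t m q : ℕ) (U : Matrix (Fin d) (Fin t) ℝ) (γr : Fin t → ℝ)
    (hU : Uᵀ * U = 1) (hγr : ∀ i, 0 < γr i)
    (rσ2 : ℝ) (hrσ : 0 < rσ2)
    (Fb : Matrix (Fin d) (Fin m) ℝ) (hFb : U * Uᵀ * Fb = Fb)
    (VR : Matrix (Fin t) (Fin q) ℝ) (Lam : Matrix (Fin q) (Fin q) ℝ) (hLam : Lam.IsDiag)
    (hVR :
      (Matrix.diagonal (fun i => (γr i) ^ (-(1/2 : ℝ))) * Uᵀ * (Fb * Fbᵀ) * U *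
          Matrix.diagonal (fun i => (γr i) ^ (-(1/2 : ℝ)))) * VR = VR * Lam) :
    let Sr : Matrix (Fin d) (Fin d) ℝ :=
      U * Matrix.diagonal γr * Uᵀ + rσ2 • ((1 : Matrix (Fin d) (Fin d) ℝ) - U * Uᵀ)
    let V : Matrix (Fin d) (Fin q) ℝ :=
      U * Matrix.diagonal (fun i => (γr i) ^ (-(1/2 : ℝ))) * VR
    Sr⁻¹ * (Fb * Fbᵀ) * V = V * Lam := by
  intro Sr V
  have hγne : ∀ i, γr i ≠ 0 := fun i => (hγr i).ne'
  set D : Matrix (Fin t) (Fin t) ℝ :=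
    Matrix.diagonal (fun i => (γr i) ^ (-(1/2 : ℝ))) with hDdef
  set Dinv : Matrix (Fin t) (Fin t) ℝ := Matrix.diagonal (fun i => (γr i)⁻¹) with hDinvdef
  have hDD : D * D = Dinv := by
    have hf : (fun i => γr i ^ (-(1/2 : ℝ)) * γr i ^ (-(1/2 : ℝ))) =
        fun i => (γr i)⁻¹ := by
      funext i
      rw [← Real.rpow_add (hγr i)]
      norm_num
      rw [show (-(1:ℝ)) = ((-1 : ℤ) : ℝ) by norm_num, Real.rpow_intCast]
      simp
    rw [hDdef, hDinvdef, Matrix.diagonal_mul_diagonal, hf]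
  have hΓDinv : Matrix.diagonal γr * Dinv = 1 := by
    have hf : (fun i => γr i * (γr i)⁻¹) = fun _ => (1 : ℝ) := by
      funext i; exact mul_inv_cancel₀ (hγne i)
    rw [hDinvdef, Matrix.diagonal_mul_diagonal, hf, Matrix.diagonal_one]
  set P : Matrix (Fin d) (Fin d) ℝ := U * Uᵀ with hPdef
  have key : ∀ (A : Matrix (Fin t) (Fin t) ℝ) {n : ℕ} (B : Matrix (Fin t) (Fin n) ℝ),
      (U * A * Uᵀ) * (U * B) = U * (A * B) := by
    intro A n B
    rw [Matrix.mul_assoc (U * A), ← Matrix.mul_assoc Uᵀ, hU, Matrix.one_mul,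
      Matrix.mul_assoc]
  have hPU : P * U = U := by rw [hPdef, Matrix.mul_assoc, hU, Matrix.mul_one]
  have hPP : P * P = P := by
    rw [hPdef, Matrix.mul_assoc, ← Matrix.mul_assoc Uᵀ, hU, Matrix.one_mul]
  set W : Matrix (Fin d) (Fin d) ℝ := U * Dinv * Uᵀ + rσ2⁻¹ • (1 - P) with hWdef
  have hPFb : P * (Fb * Fbᵀ) = Fb * Fbᵀ := by
    rw [← Matrix.mul_assoc, hPdef, hFb]
  -- Sr * W = 1
  have hSrW : Sr * W = 1 := by
    have h1 : (U * Matrix.diagonal γr * Uᵀ) * (U * Dinv * Uᵀ) = P := by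
      rw [← Matrix.mul_assoc, key, hΓDinv, Matrix.mul_one, hPdef]
    have h2 : (U * Matrix.diagonal γr * Uᵀ) * (1 - P) = 0 := by
      rw [Matrix.mul_sub, Matrix.mul_one, hPdef, ← Matrix.mul_assoc,
        Matrix.mul_assoc (U * Matrix.diagonal γr) Uᵀ U, hU, Matrix.mul_one, sub_self]
    have h3 : (1 - P) * (U * Dinv * Uᵀ) = 0 := by
      rw [Matrix.sub_mul, Matrix.one_mul, ← Matrix.mul_assoc, ← Matrix.mul_assoc, hPU,
        sub_self]
    have h4 : ((1 : Matrix (Fin d) (Fin d) ℝ) - P) * (1 - P) = 1 - P := by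
      rw [Matrix.mul_sub, Matrix.mul_one, Matrix.sub_mul, Matrix.one_mul, hPP]
      abel
    show (U * Matrix.diagonal γr * Uᵀ + rσ2 • (1 - P)) *
        (U * Dinv * Uᵀ + rσ2⁻¹ • (1 - P)) = 1
    rw [Matrix.add_mul, Matrix.mul_add, Matrix.mul_add, h1,
      Matrix.mul_smul, h2, smul_zero, Matrix.smul_mul, h3, smul_zero,
      Matrix.smul_mul, Matrix.mul_smul, h4, smul_smul,
      mul_inv_cancel₀ hrσ.ne', one_smul]
    simp [hPdef]
  have hSrinv : Sr⁻¹ = W := Matrix.inv_eq_right_inv hSrW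
  -- Now compute W * (Fb * Fbᵀ) * V
  have hWFb : W * (Fb * Fbᵀ) = U * Dinv * Uᵀ * (Fb * Fbᵀ) := by
    rw [hWdef, Matrix.add_mul, Matrix.smul_mul, Matrix.sub_mul, Matrix.one_mul, hPFb,
      sub_self, smul_zero, add_zero]
  show Sr⁻¹ * (Fb * Fbᵀ) * (U * D * VR) = (U * D * VR) * Lam
  rw [hSrinv, hWFb, ← hDD]
  calc U * (D * D) * Uᵀ * (Fb * Fbᵀ) * (U * D * VR)
      = U * D * (D * Uᵀ * (Fb * Fbᵀ) * U * D * VR) := by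
        simp only [Matrix.mul_assoc]
    _ = U * D * (VR * Lam) := by rw [← hVR]
    _ = (U * D * VR) * Lam := by simp only [Matrix.mul_assoc]
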